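/- arXiv:2502.10449 — 2 statements merged into one kernel-verified Lean document; each statement's English description precedes it below -/
import Mathlib

section
/- Let d and k be positive integers and let G be a graph containing a family F of more than d·(d!)·(k−1)^d distinct induced odd cycles, each of length at most d. Then G has a minimal odd cycle transversal of size at least k. -/
open SimpleGraph

/-- `Z` is an odd cycle transversal: `G − Z` is bipartite. -/
def IsOCT {V : Type*} (G : SimpleGraph V) (Z : Set V) : Prop :=
  (G.induce Zᶜ).Colorable 2

/-- `Z` is a minimal odd cycle transversal. -/
def IsMinOCT {V : Type*} (G : SimpleGraph V) (Z : Set V) : Prop :=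
  IsOCT G Z ∧ ∀ Z' ⊂ Z, ¬ IsOCT G Z'

/-- A closed walk is an induced (chordless) cycle. -/
def IsInducedCycle {V : Type*} (G : SimpleGraph V) {u : V} (c : G.Walk u u) : Prop :=
  c.IsCycle ∧ ∀ x y, x ∈ c.support → y ∈ c.support → G.Adj x y → c.toSubgraph.Adj x y

/-!
Only induced odd cycles of one length `s ≤ d` need to be considered, and more than
`s! (k-1)^s` of them form, by the Erdős–Rado sunflower lemma, a sunflower with `k` petals and
core `Y`. A proper subset of the vertex set of an induced cycle induces a disjoint union of paths,
so `V \ Y` is an odd cycle transversal, and it contains a minimal one, `Z`. Every petal is an odd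
cycle, so `Z` meets it, necessarily outside `Y`; the petals minus `Y` are pairwise disjoint, hence
`|Z| ≥ k`.
-/

open Finset

section Sunflower

variable {α : Type*} [DecidableEq α]

def IsSunflower (𝒮 : Finset (Finset α)) (Y : Finset α) : Prop :=
  (∀ A ∈ 𝒮, Y ⊂ A) ∧ (𝒮 : Set (Finset α)).Pairwise fun A B => A ∩ B = Y

theorem Finset.exists_pairwiseDisjoint_subset_forall_not_disjoint (F : Finset (Finset α)) :
    ∃ 𝒜 ⊆ F, (𝒜 : Set (Finset α)).PairwiseDisjoint id ∧
      ∀ A ∈ F, A.Nonempty → ∃ B ∈ 𝒜, ¬Disjoint A B := by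
  classical
  obtain ⟨𝒜, h𝒜⟩ := (F.powerset.filter fun 𝒜 : Finset (Finset α) =>
    (𝒜 : Set (Finset α)).PairwiseDisjoint id).exists_maximal ⟨∅, by simp⟩
  simp only [mem_filter, mem_powerset] at h𝒜
  refine ⟨𝒜, h𝒜.prop.1, h𝒜.prop.2, fun A hA hne => ?_⟩
  by_contra! hdisj
  have hins : insert A 𝒜 ⊆ F ∧ ((insert A 𝒜 : Finset _) : Set (Finset α)).PairwiseDisjoint id := by
    refine ⟨insert_subset hA h𝒜.prop.1, ?_⟩
    rw [coe_insert]
    exact h𝒜.prop.2.insert fun B hB _ => hdisj B hB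
  have hA𝒜 : A ∈ 𝒜 := h𝒜.2 hins (subset_insert A 𝒜) (mem_insert_self A 𝒜)
  exact hne.ne_empty (disjoint_self_iff_empty A |>.mp (hdisj A hA𝒜))

theorem exists_lt_card_filter_mem_of_mul_lt_card {F : Finset (Finset α)} {U : Finset α} {n : ℕ}
    (hU : ∀ A ∈ F, ∃ x ∈ U, x ∈ A) (h : #U * n < #F) : ∃ x ∈ U, n < #{A ∈ F | x ∈ A} := by
  by_contra! hle
  have hcover : F ⊆ U.biUnion fun x => {A ∈ F | x ∈ A} := fun A hA => by
    obtain ⟨x, hx, hxA⟩ := hU A hA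
    exact mem_biUnion.mpr ⟨x, hx, mem_filter.mpr ⟨hA, hxA⟩⟩
  exact h.not_ge ((card_le_card hcover).trans (card_biUnion_le_card_mul _ _ _ hle))

theorem IsSunflower.exists_of_subset_link {F 𝒮 : Finset (Finset α)} {x : α} {Y : Finset α}
    (h𝒮 : 𝒮 ⊆ {A ∈ F | x ∈ A}.image (·.erase x)) (hY : IsSunflower 𝒮 Y) :
    ∃ 𝒮' ⊆ F, #𝒮' = #𝒮 ∧ IsSunflower 𝒮' (insert x Y) := by
  have hx : ∀ A ∈ 𝒮, x ∉ A := fun A hA => by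
    obtain ⟨B, -, rfl⟩ := mem_image.mp (h𝒮 hA)
    exact notMem_erase x B
  have hinj : Set.InjOn (insert x) (𝒮 : Set (Finset α)) := fun A hA B hB hAB => by
    rw [← erase_insert (hx A hA), hAB, erase_insert (hx B hB)]
  refine ⟨𝒮.image (insert x), fun A' hA' => ?_, card_image_of_injOn hinj, ?_, ?_⟩
  · obtain ⟨A, hA, rfl⟩ := mem_image.mp hA'
    obtain ⟨B, hB, rfl⟩ := mem_image.mp (h𝒮 hA)
    rw [mem_filter] at hB
    rw [insert_erase hB.2]
    exact hB.1
  · simp only [mem_image, forall_exists_index, and_imp, forall_apply_eq_imp_iff₂]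
    intro A hA
    obtain ⟨t, htA, htY⟩ := exists_of_ssubset (hY.1 A hA)
    refine (ssubset_iff_of_subset (insert_subset_insert x (hY.1 A hA).subset)).mpr
      ⟨t, mem_insert_of_mem htA, ?_⟩
    rw [mem_insert, not_or]
    exact ⟨fun h => hx A hA (h ▸ htA), htY⟩
  · simp only [coe_image]
    rintro _ ⟨A, hA, rfl⟩ _ ⟨B, hB, rfl⟩ hAB
    rw [← insert_inter_distrib, hY.2 hA hB fun h => hAB (h ▸ rfl)]

theorem exists_isSunflower_of_factorial_mul_pow_lt_card {k : ℕ} :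
    ∀ {s : ℕ} {F : Finset (Finset α)}, (∀ A ∈ F, #A = s) → s.factorial * (k - 1) ^ s < #F →
      ∃ 𝒮 ⊆ F, #𝒮 = k ∧ ∃ Y, IsSunflower 𝒮 Y
  | 0, F, hF, hlt => by
    have hF1 : #F ≤ 1 := card_le_one.mpr fun A hA B hB => by
      rw [card_eq_zero.mp (hF A hA), card_eq_zero.mp (hF B hB)]
    simp only [Nat.factorial_zero, pow_zero, mul_one] at hlt
    omega
  | s + 1, F, hF, hlt => by
    have hne : ∀ A ∈ F, A.Nonempty := fun A hA => card_pos.mp (by rw [hF A hA]; omega)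
    obtain ⟨𝒜, h𝒜F, h𝒜, hhit⟩ := F.exists_pairwiseDisjoint_subset_forall_not_disjoint
    by_cases hk : k ≤ #𝒜
    · obtain ⟨𝒮, h𝒮𝒜, h𝒮k⟩ := exists_subset_card_eq hk
      refine ⟨𝒮, h𝒮𝒜.trans h𝒜F, h𝒮k, ∅, fun A hA => (hne A (h𝒜F (h𝒮𝒜 hA))).empty_ssubset,
        fun A hA B hB hAB => disjoint_iff_inter_eq_empty.mp (h𝒜 (h𝒮𝒜 hA) (h𝒮𝒜 hB) hAB)⟩
    -- a maximal disjoint subfamily has fewer than `k` members, so its union is a small hitting set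
    set U := 𝒜.biUnion id
    have hU : #U * (s.factorial * (k - 1) ^ s) ≤ (s + 1).factorial * (k - 1) ^ (s + 1) :=
      calc #U * (s.factorial * (k - 1) ^ s)
          ≤ ((k - 1) * (s + 1)) * (s.factorial * (k - 1) ^ s) := by
            gcongr
            exact (card_biUnion_le_card_mul _ _ _ fun A hA => (hF A (h𝒜F hA)).le).trans
              (Nat.mul_le_mul_right _ (by omega))
        _ = (s + 1).factorial * (k - 1) ^ (s + 1) := by
            rw [Nat.factorial_succ, pow_succ]; ring
    have hUF : ∀ A ∈ F, ∃ x ∈ U, x ∈ A := fun A hA => by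
      obtain ⟨B, hB, hAB⟩ := hhit A hA (hne A hA)
      obtain ⟨x, hxA, hxB⟩ := not_disjoint_iff.mp hAB
      exact ⟨x, mem_biUnion.mpr ⟨B, hB, hxB⟩, hxA⟩
    obtain ⟨x, -, hx⟩ := exists_lt_card_filter_mem_of_mul_lt_card hUF (hU.trans_lt hlt)
    have hlink : #({A ∈ F | x ∈ A}.image (·.erase x)) = #{A ∈ F | x ∈ A} :=
      card_image_of_injOn fun A hA B hB => erase_injOn' x (mem_filter.mp hA).2 (mem_filter.mp hB).2
    have hlink_card : ∀ A ∈ {A ∈ F | x ∈ A}.image (·.erase x), #A = s := by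
      simp only [mem_image, mem_filter]
      rintro _ ⟨A, ⟨hA, hxA⟩, rfl⟩
      rw [card_erase_of_mem hxA, hF A hA, Nat.add_sub_cancel]
    obtain ⟨𝒮, h𝒮, h𝒮k, Y, hY⟩ :=
      exists_isSunflower_of_factorial_mul_pow_lt_card hlink_card (hlink ▸ hx)
    obtain ⟨𝒮', h𝒮'F, h𝒮', hY'⟩ := hY.exists_of_subset_link h𝒮
    exact ⟨𝒮', h𝒮'F, h𝒮'.trans h𝒮k, _, hY'⟩

theorem IsSunflower.card_le_card_of_forall_inter_nonempty {𝒮 : Finset (Finset α)} {Y Z : Finset α}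
    (hY : IsSunflower 𝒮 Y) (hYZ : Disjoint Y Z) (hZ : ∀ A ∈ 𝒮, (A ∩ Z).Nonempty) : #𝒮 ≤ #Z := by
  have hdisj : (𝒮 : Set (Finset α)).PairwiseDisjoint (· ∩ Z) := fun A hA B hB hAB => by
    rw [Function.onFun, disjoint_iff_inter_eq_empty, inter_inter_inter_comm, inter_self,
      hY.2 hA hB hAB, disjoint_iff_inter_eq_empty.mp hYZ]
  exact (card_le_card_biUnion hdisj hZ).trans
    (card_le_card (biUnion_subset.mpr fun _ _ => inter_subset_right))

end Sunflower

theorem Nat.factorial_mul_pow_le_factorial_mul_pow {s d : ℕ} (hs : 1 ≤ s) (hsd : s ≤ d) (n : ℕ) :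
    s.factorial * n ^ s ≤ d.factorial * n ^ d := by
  refine Nat.mul_le_mul (Nat.factorial_le hsd) ?_
  rcases n.eq_zero_or_pos with rfl | hn
  · rw [zero_pow (by omega)]; exact Nat.zero_le _
  · exact Nat.pow_le_pow_right hn hsd

section Graph

variable {V : Type*} {G : SimpleGraph V}

theorem IsOCT.exists_mem_support_of_odd_length {Z : Set V} (hZ : IsOCT G Z) {u : V}
    (c : G.Walk u u) (hc : Odd c.length) : ∃ x ∈ c.support, x ∈ Z := by
  by_contra! h
  have := two_colorable_iff_forall_loop_even.mp hZ _ (c.induce Zᶜ h)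
  rw [← Walk.length_map (Embedding.induce Zᶜ).toHom, Walk.map_induce] at this
  exact Nat.not_even_iff_odd.mpr hc this

theorem exists_isMinOCT_subset [Finite V] {Z : Set V} (hZ : IsOCT G Z) :
    ∃ Z' ⊆ Z, IsMinOCT G Z' := by
  obtain ⟨Z', hZ'Z, hmin⟩ := exists_minimal_le_of_wellFoundedLT (IsOCT G) Z hZ
  exact ⟨Z', hZ'Z, hmin.prop, fun _ h => hmin.not_prop_of_lt h⟩

theorem SimpleGraph.Walk.IsCycle.card_support_toFinset [DecidableEq V] {u : V} {c : G.Walk u u}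
    (hc : c.IsCycle) : #c.support.toFinset = c.length := by
  have hu : u ∈ c.support.tail := c.end_mem_tail_support hc.not_nil
  have := c.length_support
  rw [← c.cons_tail_support, List.toFinset_cons, insert_eq_of_mem (List.mem_toFinset.mpr hu),
    List.toFinset_card_of_nodup hc.support_nodup]
  rw [← c.cons_tail_support, List.length_cons] at this
  omega

theorem SimpleGraph.Walk.IsPath.idxOf_support_eq_succ_of_mem_edges [DecidableEq V] {a b x y : V}
    {p : G.Walk a b} (hp : p.IsPath) (h : s(x, y) ∈ p.edges) :
    p.support.idxOf y = p.support.idxOf x + 1 ∨ p.support.idxOf x = p.support.idxOf y + 1 := by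
  induction p with
  | nil => simp at h
  | @cons a w b hadj q ih =>
    rw [Walk.cons_isPath_iff] at hp
    have hq0 : q.support.idxOf w = 0 := by rw [← q.cons_tail_support]; exact List.idxOf_cons_self
    have hwa : w ≠ a := fun h => hp.2 (h ▸ q.start_mem_support)
    rw [edges_cons, List.mem_cons, Sym2.eq_iff] at h
    rcases h with (⟨rfl, rfl⟩ | ⟨rfl, rfl⟩) | h
    · simp [List.idxOf_cons_ne _ hwa.symm, hq0]
    · simp [List.idxOf_cons_ne _ hwa.symm, hq0]
    · have hxa : x ≠ a := fun h' => hp.2 (h' ▸ q.fst_mem_support_of_mem_edges h)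
      have hya : y ≠ a := fun h' => hp.2 (h' ▸ q.snd_mem_support_of_mem_edges h)
      simp only [support_cons, List.idxOf_cons_ne _ hxa.symm, List.idxOf_cons_ne _ hya.symm]
      have := ih hp.1 h
      omega

theorem SimpleGraph.Walk.IsPath.colorable_two_induce {a b : V} {p : G.Walk a b} (hp : p.IsPath)
    {Y : Set V} (hY : ∀ x ∈ Y, ∀ y ∈ Y, G.Adj x y → s(x, y) ∈ p.edges) :
    (G.induce Y).Colorable 2 := by
  classical
  refine ⟨Coloring.mk (fun x => ⟨p.support.idxOf x.1 % 2, Nat.mod_lt _ two_pos⟩) ?_⟩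
  rintro ⟨x, hx⟩ ⟨y, hy⟩ hxy heq
  have := hp.idxOf_support_eq_succ_of_mem_edges (hY x hx y hy hxy)
  simp only [Fin.mk.injEq] at heq
  omega

theorem IsInducedCycle.colorable_two_induce_of_notMem {u v : V} {c : G.Walk u u}
    (hc : IsInducedCycle G c) (hv : v ∈ c.support) {Y : Set V} (hYc : ∀ y ∈ Y, y ∈ c.support)
    (hvY : v ∉ Y) :
    (G.induce Y).Colorable 2 := by
  classical
  have hc' : (c.rotate v hv).IsCycle := hc.1.rotate hv
  refine hc'.isPath_tail.colorable_two_induce fun x hx y hy hxy => ?_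
  have hxy' : s(x, y) ∈ (c.rotate v hv).edges := (c.rotate_edges v hv).mem_iff.mpr
    (c.mem_edges_toSubgraph.mp (hc.2 x y (hYc x hx) (hYc y hy) hxy))
  rw [← (c.rotate v hv).cons_tail_eq hc'.not_nil, Walk.edges_cons, List.mem_cons,
    Sym2.eq_iff] at hxy'
  rcases hxy' with (⟨rfl, -⟩ | ⟨-, rfl⟩) | h
  · exact absurd hx hvY
  · exact absurd hy hvY
  · exact h

end Graph

theorem stmt11_general {V : Type*} [Fintype V] [DecidableEq V] (G : SimpleGraph V) (d k : ℕ)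
    (hk : 0 < k)
    (𝒞 : Finset (Finset V))
    (hmem : ∀ C ∈ 𝒞, ∃ (u : V) (c : G.Walk u u), IsInducedCycle G c ∧ Odd c.length ∧
      c.length ≤ d ∧ c.support.toFinset = C)
    (hcard : d * Nat.factorial d * (k - 1) ^ d < 𝒞.card) :
    ∃ Z : Set V, IsMinOCT G Z ∧ k ≤ Z.ncard := by
  classical
  have hsize : ∀ C ∈ 𝒞, #C ∈ Icc 1 d := fun C hC => by
    obtain ⟨u, c, hc, hodd, hlen, rfl⟩ := hmem C hC
    rw [hc.1.card_support_toFinset, mem_Icc]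
    exact ⟨hodd.pos, hlen⟩
  obtain ⟨s, hs, hs𝒞⟩ := exists_lt_card_fiber_of_mul_lt_card_of_maps_to hsize
    (by rwa [Nat.card_Icc, Nat.add_sub_cancel, ← mul_assoc])
  rw [mem_Icc] at hs
  obtain ⟨𝒮, h𝒮, h𝒮k, Y, hY⟩ := exists_isSunflower_of_factorial_mul_pow_lt_card
    (fun A hA => (mem_filter.mp hA).2)
    ((Nat.factorial_mul_pow_le_factorial_mul_pow hs.1 hs.2 (k - 1)).trans_lt hs𝒞)
  have h𝒮𝒞 : 𝒮 ⊆ 𝒞 := h𝒮.trans (filter_subset _ _)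
  obtain ⟨A, hA⟩ := card_pos.mp (h𝒮k ▸ hk)
  obtain ⟨u, c, hc, -, -, rfl⟩ := hmem A (h𝒮𝒞 hA)
  obtain ⟨v, hvA, hvY⟩ := exists_of_ssubset (hY.1 _ hA)
  have hoct : IsOCT G (↑Y)ᶜ := by
    rw [IsOCT, compl_compl]
    exact hc.colorable_two_induce_of_notMem (List.mem_toFinset.mp hvA)
      (fun y hy => List.mem_toFinset.mp ((hY.1 _ hA).subset hy)) hvY
  obtain ⟨Z, hZY, hZ⟩ := exists_isMinOCT_subset hoct
  refine ⟨Z, hZ, ?_⟩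
  rw [← h𝒮k, Set.ncard_eq_toFinset_card']
  refine hY.card_le_card_of_forall_inter_nonempty ?_ fun B hB => ?_
  · exact disjoint_left.mpr fun y hy hyZ => hZY (Set.mem_toFinset.mp hyZ) hy
  · obtain ⟨w, p, -, hodd, -, rfl⟩ := hmem B (h𝒮𝒞 hB)
    obtain ⟨x, hx, hxZ⟩ := hZ.1.exists_mem_support_of_odd_length p hodd
    exact ⟨x, mem_inter.mpr ⟨List.mem_toFinset.mpr hx, Set.mem_toFinset.mpr hxZ⟩⟩

theorem stmt11 {V : Type*} [Fintype V] [DecidableEq V] (G : SimpleGraph V) (d k : ℕ)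
    (hd : 0 < d) (hk : 0 < k)
    (𝒞 : Finset (Finset V))
    (hmem : ∀ C ∈ 𝒞, ∃ (u : V) (c : G.Walk u u), IsInducedCycle G c ∧ Odd c.length ∧
      c.length ≤ d ∧ c.support.toFinset = C)
    (hcard : d * Nat.factorial d * (k - 1) ^ d < 𝒞.card) :
    ∃ Z : Set V, IsMinOCT G Z ∧ k ≤ Z.ncard :=
  stmt11_general G d k hk 𝒞 hmem hcard
end

section
/- Let G be a graph, v ∈ V(G) a vertex not lying on any induced odd cycle of G, and k a positive integer. Then G has a minimal odd cycle transversal of size at least k if and only if G − v has a minimal odd cycle transversal of size at least k. -/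
/-!
If `G - Z` is bipartite then so is `G - (Z \ {v})`, so minimal odd cycle transversals avoid `v`
and are exactly the minimal odd cycle transversals of `G - v`. To extend a 2-colouring `c` of
`G - v` to `G`: if two neighbours of `v` with different colours lie in one component of `G - v`,
take such a pair at minimum distance; a shortest path between them has no chords and meets no
other neighbour of `v`, so together with `v` it is an induced cycle, odd because the colours of
its ends differ. Otherwise the neighbours of `v` in each component share a colour, and flipping
components makes all of them `true`, leaving `false` for `v`.
-/

open SimpleGraph

theorem Set.minimal_image_val_iff {α : Type*} {s : Set α} {P : Set α → Prop} {T : Set s} :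
    Minimal P (Subtype.val '' T) ↔ Minimal (fun T' => P (Subtype.val '' T')) T := by
  have hmono {A B : Set s} : Subtype.val '' A ⊆ Subtype.val '' B ↔ A ⊆ B :=
    Set.image_subset_image_iff Subtype.val_injective
  refine ⟨fun h => ⟨h.prop, fun T' hT' hle => ?_⟩, fun h => ⟨h.prop, fun Y hY hle => ?_⟩⟩
  · exact hmono.mp (h.le_of_le hT' (hmono.mpr hle))
  · obtain ⟨T', rfl⟩ := Set.subset_range_iff_exists_image_eq.mp
      (hle.trans (Set.image_subset_range _ _))
    exact hmono.mpr (h.le_of_le hY (hmono.mp hle))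

namespace SimpleGraph

variable {V V' : Type*} {G : SimpleGraph V} {G' : SimpleGraph V'}

namespace Walk

variable {u w : V}

theorem isChordless_iff_forall_adj_toSubgraph {p : G.Walk u w} :
    p.IsChordless ↔
      ∀ x y, x ∈ p.support → y ∈ p.support → G.Adj x y → p.toSubgraph.Adj x y := by
  simp only [isChordless_iff_forall_mem_edges, adj_toSubgraph_iff_mem_edges]

theorem IsChordless.map {p : G.Walk u w} (hp : p.IsChordless) (f : G ↪g G') :
    (p.map f.toHom).IsChordless := by
  rw [isChordless_iff_forall_mem_edges] at hp ⊢
  simp only [support_map, edges_map, List.mem_map]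
  rintro _ _ ⟨x, hx, rfl⟩ ⟨y, hy, rfl⟩ hxy
  exact ⟨s(x, y), hp hx hy (f.map_adj_iff.mp hxy), rfl⟩

theorem dist_getVert_of_length_eq_dist (p : G.Walk u w) (hp : p.length = G.dist u w) {i : ℕ}
    (hi : i ≤ p.length) : G.dist u (p.getVert i) = i := by
  refine le_antisymm (by simpa [hi] using dist_le (p.take i)) ?_
  obtain ⟨q, hq⟩ := (p.take i).reachable.exists_walk_length_eq_dist
  have := dist_le (q.append (p.drop i))
  simp only [length_append, drop_length] at this
  omega

theorem isChordless_of_length_eq_dist (p : G.Walk u w) (hp : p.length = G.dist u w) :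
    p.IsChordless := by
  rw [isChordless_iff_forall_adj_toSubgraph]
  intro x y hx hy hxy
  obtain ⟨i, rfl, hi⟩ := mem_support_iff_exists_getVert.mp hx
  obtain ⟨j, rfl, hj⟩ := mem_support_iff_exists_getVert.mp hy
  have hdist {i j : ℕ} (hi : i ≤ p.length) (hj : j ≤ p.length)
      (hij : G.Adj (p.getVert i) (p.getVert j)) : j ≤ i + 1 := by
    have := dist_le ((p.take i).concat (by simpa [hi] using hij))
    rwa [length_concat, take_length, min_eq_left hi, p.dist_getVert_of_length_eq_dist hp hj]
      at this
  have hne : i ≠ j := by rintro rfl; exact G.irrefl hxy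
  rcases (show j = i + 1 ∨ i = j + 1 by
      have := hdist hi hj hxy; have := hdist hj hi hxy.symm; omega) with rfl | rfl
  · exact p.toSubgraph_adj_getVert (by omega)
  · exact (p.toSubgraph_adj_getVert (by omega)).symm

theorem mem_support_cons_concat {a b v x : V} (q : G.Walk a b) (hva : G.Adj v a)
    (hbv : G.Adj b v) : x ∈ (cons hva (q.concat hbv)).support ↔ x = v ∨ x ∈ q.support := by
  simp only [support_cons, support_concat, List.mem_cons, List.mem_append, List.not_mem_nil,
    or_comm, false_or, or_self_left]

theorem mem_edges_cons_concat {a b v : V} (q : G.Walk a b) (hva : G.Adj v a) (hbv : G.Adj b v)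
    (e : Sym2 V) :
    e ∈ (cons hva (q.concat hbv)).edges ↔ e = s(v, a) ∨ e ∈ q.edges ∨ e = s(b, v) := by
  simp only [edges_cons, edges_concat, List.concat_eq_append, List.mem_cons, List.mem_append,
    List.not_mem_nil, or_false]

theorem IsPath.isCycle_cons_concat {a b v : V} {q : G.Walk a b} (hq : q.IsPath) (hab : a ≠ b)
    (hva : G.Adj v a) (hbv : G.Adj b v) (hvq : v ∉ q.support) :
    (cons hva (q.concat hbv)).IsCycle := by
  refine (cons_isCycle_iff _ hva).mpr ⟨hq.concat hvq hbv, ?_⟩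
  rw [edges_concat, List.concat_eq_append, List.mem_append, List.mem_singleton, not_or,
    Sym2.eq_iff]
  exact ⟨fun h => hvq (fst_mem_support_of_mem_edges q h), by
    rintro (⟨rfl, -⟩ | ⟨-, rfl⟩)
    exacts [hvq q.end_mem_support, hab rfl]⟩

theorem IsChordless.cons_concat {a b v : V} {q : G.Walk a b} (hq : q.IsChordless)
    (hva : G.Adj v a) (hbv : G.Adj b v)
    (hN : ∀ x ∈ q.support, G.Adj v x → x = a ∨ x = b) :
    (cons hva (q.concat hbv)).IsChordless := by
  rw [isChordless_iff_forall_mem_edges] at hq ⊢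
  have hN' : ∀ x ∈ q.support, G.Adj v x → s(v, x) ∈ (cons hva (q.concat hbv)).edges := by
    intro x hx hvx
    rcases hN x hx hvx with rfl | rfl <;> simp [Sym2.eq_swap]
  intro x y hx hy hxy
  rw [mem_support_cons_concat] at hx hy
  rcases hx with rfl | hx <;> rcases hy with rfl | hy
  · exact absurd hxy G.irrefl
  · exact hN' y hy hxy
  · rw [Sym2.eq_swap]; exact hN' x hx hxy.symm
  · exact (mem_edges_cons_concat ..).mpr (.inr (.inl (hq hx hy hxy)))

end Walk

def Coloring.flipComponents (c : G.Coloring Bool) (f : G.ConnectedComponent → Bool) :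
    G.Coloring Bool :=
  Coloring.mk (fun x => xor (c x) (f (G.connectedComponentMk x))) fun hxy => by
    rw [ConnectedComponent.eq.mpr hxy.reachable]
    simpa using c.valid hxy

end SimpleGraph

section

variable {V V' : Type*} {G : SimpleGraph V} {G' : SimpleGraph V'}

theorem isInducedCycle_iff {u : V} {c : G.Walk u u} :
    IsInducedCycle G c ↔ c.IsCycle ∧ c.IsChordless := by
  rw [IsInducedCycle, Walk.isChordless_iff_forall_adj_toSubgraph]

theorem IsInducedCycle.map {u : V} {c : G.Walk u u} (hc : IsInducedCycle G c) (f : G ↪g G') :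
    IsInducedCycle G' (c.map f.toHom) := by
  rw [isInducedCycle_iff] at hc ⊢
  exact ⟨hc.1.map f.injective, hc.2.map f⟩

theorem SimpleGraph.Walk.IsPath.exists_isInducedCycle_of_isChordless {a b v : V} {q : G.Walk a b}
    (hq : q.IsPath) (hqc : q.IsChordless) (hab : a ≠ b) (ha : G.Adj v a) (hb : G.Adj v b)
    (hvq : v ∉ q.support) (hN : ∀ x ∈ q.support, G.Adj v x → x = a ∨ x = b) :
    ∃ C : G.Walk v v, IsInducedCycle G C ∧ C.length = q.length + 2 :=
  ⟨_, isInducedCycle_iff.mpr ⟨hq.isCycle_cons_concat hab ha hb.symm hvq,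
    hqc.cons_concat ha hb.symm hN⟩, by simp⟩

theorem exists_odd_isInducedCycle_of_reachable {v : V}
    (c : (G.induce {v}ᶜ).Coloring Bool) {a b : ({v}ᶜ : Set V)} (ha : G.Adj v a) (hb : G.Adj v b)
    (hab : c a ≠ c b) (hr : (G.induce {v}ᶜ).Reachable a b) :
    ∃ C : G.Walk v v, IsInducedCycle G C ∧ Odd C.length := by
  classical
  induction hn : (G.induce {v}ᶜ).dist a b using Nat.strong_induction_on generalizing a b with
  | _ n ih =>
  obtain ⟨p, hp⟩ := hr.exists_walk_length_eq_dist
  by_cases hN : ∃ x ∈ p.support, G.Adj v x ∧ x ≠ a ∧ x ≠ b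
  · -- `x` differs in colour from `a` or from `b`, which gives a closer pair
    obtain ⟨x, hx, hvx, hxa, hxb⟩ := hN
    by_cases hxa' : c a = c x
    · refine ih _ ?_ hvx hb (hxa' ▸ hab) (p.dropUntil x hx).reachable rfl
      exact hn ▸ hp ▸ (dist_le _).trans_lt (p.length_dropUntil_lt_length hx hxa)
    · refine ih _ ?_ ha hvx hxa' (p.takeUntil x hx).reachable rfl
      exact hn ▸ hp ▸ (dist_le _).trans_lt (p.length_takeUntil_lt_length hx hxb)
  push Not at hN
  set q := p.map (Embedding.induce ({v}ᶜ : Set V)).toHom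
  have hpath : q.IsPath := (p.isPath_of_length_eq_dist hp).map Subtype.val_injective
  have hchordless : q.IsChordless := (p.isChordless_of_length_eq_dist hp).map _
  have hvq : v ∉ q.support := by
    rw [Walk.support_map, List.mem_map]
    rintro ⟨x, -, hx⟩
    exact x.2 hx
  have hN' : ∀ x ∈ q.support, G.Adj v x → x = a ∨ x = b := by
    rw [Walk.support_map]
    rintro _ hx hvx
    obtain ⟨x, hxp, rfl⟩ := List.mem_map.mp hx
    by_contra! h
    exact h.2 (congrArg Subtype.val (hN x hxp hvx (fun e => h.1 (e ▸ rfl))))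
  have hodd : Odd p.length :=
    (c.odd_length_iff_not_congr p).mpr (by revert hab; cases c a <;> cases c b <;> simp)
  have hab' : (a : V) ≠ b := fun h => hab (congrArg c (Subtype.ext h))
  obtain ⟨C, hC, hlen⟩ := hpath.exists_isInducedCycle_of_isChordless hchordless hab' ha hb hvq hN'
  refine ⟨C, hC, ?_⟩
  rw [hlen, Walk.length_map]
  exact hodd.add_even even_two

theorem colorable_of_coloring_induce_compl_singleton {v : V} (c : (G.induce {v}ᶜ).Coloring Bool)
    (h : ∀ x : ({v}ᶜ : Set V), G.Adj v x → c x = true) : G.Colorable 2 := by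
  classical
  refine ⟨recolorOfEquiv G finTwoEquiv.symm <|
    Coloring.mk (fun x => if hx : x = v then false else c ⟨x, hx⟩) fun {x y} hxy => ?_⟩
  by_cases hx : x = v <;> by_cases hy : y = v
  · exact absurd (hx ▸ hy ▸ hxy) G.irrefl
  · subst hx; simp [hy, h ⟨y, hy⟩ hxy]
  · subst hy; simp [hx, h ⟨x, hx⟩ hxy.symm]
  · simpa [hx, hy] using c.valid (show (G.induce {v}ᶜ).Adj ⟨x, hx⟩ ⟨y, hy⟩ from hxy)

theorem colorable_of_colorable_induce_compl_singleton {v : V}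
    (hv : ∀ C : G.Walk v v, IsInducedCycle G C → Even C.length)
    (h : (G.induce {v}ᶜ).Colorable 2) : G.Colorable 2 := by
  classical
  set K := G.induce {v}ᶜ
  let c : K.Coloring Bool := recolorOfEquiv K finTwoEquiv h.some
  have hc : ∀ a b : ({v}ᶜ : Set V), G.Adj v a → G.Adj v b → K.Reachable a b → c a = c b := by
    intro a b ha hb hr
    by_contra hab
    obtain ⟨C, hC, hodd⟩ := exists_odd_isInducedCycle_of_reachable c ha hb hab hr
    exact Nat.not_even_iff_odd.mpr hodd (hv C hC)
  let flipped (C : K.ConnectedComponent) : Bool :=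
    decide (∃ a, K.connectedComponentMk a = C ∧ G.Adj v a ∧ c a = false)
  refine colorable_of_coloring_induce_compl_singleton (c.flipComponents flipped) fun x hx => ?_
  have hflip : c.flipComponents flipped x = xor (c x) (flipped (K.connectedComponentMk x)) := rfl
  cases hcx : c x <;> simp only [hflip, hcx, flipped, Bool.false_xor, Bool.true_xor,
    Bool.not_eq_eq_eq_not, Bool.not_true, decide_eq_true_eq, decide_eq_false_iff_not,
    ConnectedComponent.eq]
  · exact ⟨x, .refl x, hx, hcx⟩
  · rintro ⟨a, hax, ha, hca⟩
    simpa [hca, hcx] using hc a x ha hx hax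

theorem colorable_induce_insert {v : V} (hv : ∀ C : G.Walk v v, IsInducedCycle G C → Even C.length)
    {W : Set V} (h : (G.induce W).Colorable 2) : (G.induce (insert v W)).Colorable 2 := by
  let v' : ↥(insert v W) := ⟨v, Set.mem_insert v W⟩
  refine colorable_of_colorable_induce_compl_singleton (v := v') (fun C hC => ?_) ?_
  · exact C.length_map _ ▸ hv _ (hC.map (Embedding.induce (insert v W)))
  · exact h.of_hom ⟨fun x => ⟨x.1, x.1.2.resolve_left fun e => x.2 (Subtype.ext e)⟩, fun hxy => hxy⟩

theorem isMinOCT_iff_minimal {Z : Set V} : IsMinOCT G Z ↔ Minimal (IsOCT G) Z :=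
  Set.minimal_iff_forall_ssubset.symm

theorem IsOCT.diff_singleton {v : V} (hv : ∀ C : G.Walk v v, IsInducedCycle G C → Even C.length)
    {Z : Set V} (hZ : IsOCT G Z) : IsOCT G (Z \ {v}) := by
  rw [IsOCT, Set.compl_sdiff, Set.singleton_union]
  exact colorable_induce_insert hv hZ

theorem IsMinOCT.notMem {v : V} (hv : ∀ C : G.Walk v v, IsInducedCycle G C → Even C.length)
    {Z : Set V} (hZ : IsMinOCT G Z) : v ∉ Z := fun hvZ =>
  hZ.2 _ (Set.sdiff_singleton_ssubset.mpr hvZ) (hZ.1.diff_singleton hv)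

theorem isOCT_induce_compl_singleton_iff {v : V}
    (hv : ∀ C : G.Walk v v, IsInducedCycle G C → Even C.length) {T : Set ({v}ᶜ : Set V)} :
    IsOCT (G.induce {v}ᶜ) T ↔ IsOCT G (Subtype.val '' T) := by
  refine ⟨fun h => ?_, fun h => ?_⟩
  · have h' : (G.induce (insert v (Subtype.val '' T))ᶜ).Colorable 2 := h.of_hom
      ⟨fun x => ⟨⟨x.1, fun e => x.2 (.inl e)⟩, fun hx => x.2 (.inr ⟨_, hx, rfl⟩)⟩, fun hxy => hxy⟩
    refine (colorable_induce_insert hv h').of_hom (G.induceHomOfLE fun x hx => ?_).toHom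
    by_cases hxv : x = v
    exacts [.inl hxv, .inr fun hx' => hx (hx'.resolve_left hxv)]
  · exact h.of_hom ⟨fun x => ⟨x.1.1, fun ⟨y, hy, e⟩ => x.2 (Subtype.ext e ▸ hy)⟩, fun hxy => hxy⟩

theorem isMinOCT_induce_compl_singleton_iff {v : V}
    (hv : ∀ C : G.Walk v v, IsInducedCycle G C → Even C.length) {T : Set ({v}ᶜ : Set V)} :
    IsMinOCT (G.induce {v}ᶜ) T ↔ IsMinOCT G (Subtype.val '' T) := by
  simp only [isMinOCT_iff_minimal, Set.minimal_image_val_iff,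
    ← isOCT_induce_compl_singleton_iff hv]

end

theorem stmt15_general {V : Type*} (G : SimpleGraph V) (v : V) (k : ℕ)
    (hv : ¬ ∃ (u : V) (c : G.Walk u u), IsInducedCycle G c ∧ Odd c.length ∧ v ∈ c.support) :
    (∃ Z : Set V, IsMinOCT G Z ∧ k ≤ Z.ncard) ↔
      (∃ Z' : Set ↥({v}ᶜ : Set V), IsMinOCT (G.induce ({v}ᶜ : Set V)) Z' ∧ k ≤ Z'.ncard) := by
  have hv' : ∀ C : G.Walk v v, IsInducedCycle G C → Even C.length := fun C hC =>
    Nat.not_odd_iff_even.mp fun hodd => hv ⟨v, C, hC, hodd, C.start_mem_support⟩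
  have hcard (T : Set ({v}ᶜ : Set V)) : (Subtype.val '' T).ncard = T.ncard :=
    Set.ncard_image_of_injective T Subtype.val_injective
  constructor
  · rintro ⟨Z, hZ, hk⟩
    have hZv : Z ⊆ Set.range (Subtype.val : ({v}ᶜ : Set V) → V) := by
      rw [Subtype.range_coe]
      exact Set.subset_compl_singleton_iff.mpr (hZ.notMem hv')
    obtain ⟨T, rfl⟩ := Set.subset_range_iff_exists_image_eq.mp hZv
    exact ⟨T, (isMinOCT_induce_compl_singleton_iff hv').mpr hZ, hcard T ▸ hk⟩
  · rintro ⟨T, hT, hk⟩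
    exact ⟨_, (isMinOCT_induce_compl_singleton_iff hv').mp hT, (hcard T).symm ▸ hk⟩

theorem stmt15 {V : Type*} [Fintype V] (G : SimpleGraph V) (v : V) (k : ℕ) (hk : 0 < k)
    (hv : ¬ ∃ (u : V) (c : G.Walk u u), IsInducedCycle G c ∧ Odd c.length ∧ v ∈ c.support) :
    (∃ Z : Set V, IsMinOCT G Z ∧ k ≤ Z.ncard) ↔
      (∃ Z' : Set ↥({v}ᶜ : Set V), IsMinOCT (G.induce ({v}ᶜ : Set V)) Z' ∧ k ≤ Z'.ncard) :=
  stmt15_general G v k hv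
end
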